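/- Universal property of the Ind-completion: let C be a small category and D a category with all filtered colimits. Then the functor given by precomposition with Ind.yoneda : C ⥤ Ind C, from the full subcategory of the functor category (Ind C ⥤ D) spanned by the filtered-colimit-preserving functors, to the functor category C ⥤ D, is an equivalence of categories. -/

import Mathlib

/-!
Each `Ind.yoneda.obj c` is finitely presentable in `Ind C`, since maps out of it are evaluation
of the underlying presheaf at `c`, and filtered colimits in `Ind C` are computed pointwise.
Consequently every ind-object is the colimit of its canonical diagram `CostructuredArrow
Ind.yoneda X`, which is small and filtered, so a functor preserving filtered colimits is the
pointwise left Kan extension of its restriction to `C`; this gives full faithfulness.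
Conversely, the pointwise left Kan extension of any `F₀ : C ⥤ D` preserves filtered colimits:
a map `Ind.yoneda.obj c ⟶ colim Hⱼ` factors through some stage `Hⱼ`, and any two factorizations
become equal at a later stage. Since `Ind.yoneda` is fully faithful, the extension restricts back
to `F₀`, which gives essential surjectivity.
-/

open CategoryTheory Limits Opposite Functor

universe v u

namespace CategoryTheory

section Dense

variable {C E : Type*} [Category* C] [Category* E]

lemma Functor.isDenseAt_of_isColimit (L : C ⥤ E) [L.Full] [L.Faithful]
    {I : Type*} [Category* I] [IsFiltered I] {F : I ⥤ C} {c : Cocone (F ⋙ L)}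
    (hc : IsColimit c) [∀ X, PreservesColimit (F ⋙ L) (coyoneda.obj (op (L.obj X)))] :
    L.isDenseAt c.pt := by
  let G := F.toCostructuredArrow L c.pt c.ι.app c.w
  have : G.Final := by
    rw [Functor.final_iff_of_isFiltered]
    refine ⟨fun f ↦ ?_, fun {f i} g₁ g₂ ↦ ?_⟩
    · obtain ⟨i, g, hg⟩ := exists_hom_of_preservesColimit_coyoneda hc f.hom
      exact ⟨i, ⟨CostructuredArrow.homMk (L.preimage g) (by erw [L.map_preimage]; exact hg)⟩⟩
    · obtain ⟨k, a, h⟩ := exists_eq_of_preservesColimit_coyoneda_self hc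
        (L.map g₁.left) (L.map g₂.left)
        ((CostructuredArrow.w g₁).trans (CostructuredArrow.w g₂).symm)
      exact ⟨k, a, by ext; exact L.map_injective (by erw [L.map_comp, L.map_comp]; exact h)⟩
  exact ⟨(Functor.Final.isColimitWhiskerEquiv G _).1
    (IsColimit.ofIsoColimit hc (Cocone.ext (Iso.refl _) (fun _ ↦ by
      erw [Category.comp_id]; exact (Category.id_comp _).symm)))⟩

variable {D : Type*} [Category* D]

noncomputable def Functor.DenseAt.isPointwiseLeftKanExtensionAt {L : C ⥤ E} {Y : E}
    (hY : L.DenseAt Y) (G : E ⥤ D) [PreservesColimit (CostructuredArrow.proj L Y ⋙ L) G] :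
    (LeftExtension.mk G (𝟙 (L ⋙ G))).IsPointwiseLeftKanExtensionAt Y :=
  (isColimitOfPreserves G hY).ofIsoColimit (Cocone.ext (Iso.refl _) (fun g ↦ by
    change G.map (𝟙 _ ≫ g.hom) ≫ 𝟙 _ = 𝟙 _ ≫ G.map g.hom
    simp))

end Dense

section FilteredColimits

variable {C E D : Type*} [Category* C] [Category* E] [Category* D]
  {J : Type*} [Category* J] {H : J ⥤ E} {t : Cocone H} (ht : IsColimit t)

include ht in
lemma Limits.map_comp_ι_app_eq_of_preservesColimit_coyoneda [IsFiltered J] {X : E}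
    [PreservesColimit H (coyoneda.obj (op X))] {G : E ⥤ D} (s : Cocone (H ⋙ G)) {i j : J}
    {g : X ⟶ H.obj i} {g' : X ⟶ H.obj j} (h : g ≫ t.ι.app i = g' ≫ t.ι.app j) :
    G.map g ≫ s.ι.app i = G.map g' ≫ s.ι.app j := by
  obtain ⟨k, u, v, huv⟩ := exists_eq_of_preservesColimit_coyoneda ht g g' h
  rw [← s.w u, ← s.w v]
  simp only [Functor.comp_map, ← G.map_comp_assoc, huv]

variable {L : C ⥤ E} {F₀ : C ⥤ D} {F' : E ⥤ D} (α : F₀ ⟶ L ⋙ F')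
  [∀ c, PreservesColimit H (coyoneda.obj (op (L.obj c)))]

/-- The leg at `p : L.obj c ⟶ t.pt` of the cocone that `F'.mapCocone t` must descend to: factor
`p` through a stage `H.obj j` (by a choice, which does not matter by `legOfFactorization_eq`) and
follow `s` from there. -/
noncomputable def legOfFactorization (s : Cocone (H ⋙ F')) (p : CostructuredArrow L t.pt) :
    F₀.obj p.left ⟶ s.pt :=
  α.app p.left ≫ F'.map (exists_hom_of_preservesColimit_coyoneda ht p.hom).choose_spec.choose ≫
    s.ι.app (exists_hom_of_preservesColimit_coyoneda ht p.hom).choose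

variable [IsFiltered J]

lemma legOfFactorization_eq (s : Cocone (H ⋙ F')) (p : CostructuredArrow L t.pt)
    {j : J} (g : L.obj p.left ⟶ H.obj j) (hg : g ≫ t.ι.app j = p.hom) :
    legOfFactorization ht α s p = α.app p.left ≫ F'.map g ≫ s.ι.app j := by
  have h := (exists_hom_of_preservesColimit_coyoneda ht p.hom).choose_spec.choose_spec
  rw [legOfFactorization,
    map_comp_ι_app_eq_of_preservesColimit_coyoneda ht s (g' := g) (h.trans hg.symm)]

noncomputable def coconeOfFactorizations (s : Cocone (H ⋙ F')) :
    Cocone (CostructuredArrow.proj L t.pt ⋙ F₀) where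
  pt := s.pt
  ι :=
    { app := legOfFactorization ht α s
      naturality p q φ := by
        obtain ⟨j, g, hg⟩ := exists_hom_of_preservesColimit_coyoneda ht q.hom
        have hpg : (L.map φ.left ≫ g) ≫ t.ι.app j = p.hom := by
          rw [Category.assoc, hg, CostructuredArrow.w φ]
        change F₀.map φ.left ≫ _ = _ ≫ 𝟙 _
        rw [legOfFactorization_eq ht α s q g hg, legOfFactorization_eq ht α s p _ hpg,
          α.naturality_assoc, Category.comp_id, Functor.comp_map, F'.map_comp,
          Category.assoc] }

namespace Functor.LeftExtension.IsPointwiseLeftKanExtension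

variable {α} (hα : (LeftExtension.mk F' α).IsPointwiseLeftKanExtension)

noncomputable def descOfFactorizations (s : Cocone (H ⋙ F')) : F'.obj t.pt ⟶ s.pt :=
  (hα t.pt).desc (coconeOfFactorizations ht α s)

lemma map_comp_descOfFactorizations (s : Cocone (H ⋙ F')) {c : C} (f : L.obj c ⟶ t.pt) :
    α.app c ≫ F'.map f ≫ hα.descOfFactorizations ht s =
      legOfFactorization ht α s (CostructuredArrow.mk f) :=
  (Category.assoc _ _ _).symm.trans ((hα t.pt).fac _ (CostructuredArrow.mk f))

noncomputable def isColimitMapCocone : IsColimit (F'.mapCocone t) where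
  desc := hα.descOfFactorizations ht
  fac s j := (hα (H.obj j)).hom_ext' fun c g ↦ by
    change α.app c ≫ F'.map g ≫ F'.map (t.ι.app j) ≫ _ = α.app c ≫ F'.map g ≫ s.ι.app j
    rw [← F'.map_comp_assoc, map_comp_descOfFactorizations, legOfFactorization_eq ht α s _ g rfl]
    rfl
  uniq s m hm := (hα t.pt).hom_ext' fun c f ↦ by
    obtain ⟨j, g, rfl⟩ := exists_hom_of_preservesColimit_coyoneda ht f
    change α.app c ≫ F'.map _ ≫ m = α.app c ≫ F'.map _ ≫ hα.descOfFactorizations ht s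
    rw [map_comp_descOfFactorizations, legOfFactorization_eq ht α s _ g rfl,
      F'.map_comp_assoc, ← hm]
    rfl

end Functor.LeftExtension.IsPointwiseLeftKanExtension

end FilteredColimits

section Restriction

variable {C E D : Type*} [Category* C] [Category* E] [Category* D]

noncomputable def ObjectProperty.fullyFaithfulιCompWhiskeringLeftObj {L : C ⥤ E}
    (P : ObjectProperty (E ⥤ D)) (hP : ∀ F, P F → F.IsLeftKanExtension (𝟙 (L ⋙ F))) :
    (P.ι ⋙ (whiskeringLeft C E D).obj L).FullyFaithful where
  preimage {F G} β :=
    have := hP F.obj F.property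
    ObjectProperty.homMk (F.obj.descOfIsLeftKanExtension (𝟙 _) G.obj β)
  map_preimage {F G} β := by
    have := hP F.obj F.property
    simpa using F.obj.descOfIsLeftKanExtension_fac (𝟙 _) G.obj β
  preimage_map {F G} γ := by
    have := hP F.obj F.property
    ext1
    exact F.obj.hom_ext_of_isLeftKanExtension (𝟙 _) _ _
      (by simpa using F.obj.descOfIsLeftKanExtension_fac (𝟙 _) G.obj _)

lemma ObjectProperty.isEquivalence_ιCompWhiskeringLeftObj {L : C ⥤ E} [L.Full] [L.Faithful]
    [∀ F₀ : C ⥤ D, L.HasPointwiseLeftKanExtension F₀] (P : ObjectProperty (E ⥤ D))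
    (hP : ∀ F, P F → F.IsLeftKanExtension (𝟙 (L ⋙ F)))
    (hLan : ∀ F₀ : C ⥤ D, P (L.pointwiseLeftKanExtension F₀)) :
    (P.ι ⋙ (whiskeringLeft C E D).obj L).IsEquivalence where
  full := (P.fullyFaithfulιCompWhiskeringLeftObj hP).full
  faithful := (P.fullyFaithfulιCompWhiskeringLeftObj hP).faithful
  essSurj.mem_essImage F₀ := by
    have : IsIso (L.pointwiseLeftKanExtensionUnit F₀) :=
      (L.pointwiseLeftKanExtensionIsPointwiseLeftKanExtension F₀).isIso_hom
    exact ⟨⟨_, hLan F₀⟩, ⟨(asIso (L.pointwiseLeftKanExtensionUnit F₀)).symm⟩⟩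

end Restriction

namespace Ind

variable {C : Type v} [SmallCategory C]

noncomputable def coyonedaObjYonedaObjIso (c : C) :
    coyoneda.obj (op (Ind.yoneda.obj c)) ≅
      Ind.inclusion C ⋙ (evaluation Cᵒᵖ (Type v)).obj (op c) :=
  NatIso.ofComponents fun X ↦ Equiv.toIso
    (Ind.inclusion.fullyFaithful.homEquiv.trans
      (((Ind.yonedaCompInclusion.app c).homCongr (Iso.refl _)).trans yonedaEquiv))

instance isFinitelyPresentable_yoneda_obj (c : C) :
    IsFinitelyPresentable.{v} (Ind.yoneda.obj c) :=
  isFinitelyPresentable_iff_preservesFilteredColimits.2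
    ⟨fun _ _ _ ↦ preservesColimitsOfShape_of_natIso (coyonedaObjYonedaObjIso c).symm⟩

instance : (Ind.yoneda : C ⥤ Ind C).IsDense where
  isDenseAt X := Ind.yoneda.isDenseAt.prop_of_iso (Ind.colimitPresentationCompYoneda X)
    (Ind.yoneda.isDenseAt_of_isColimit (colimit.isColimit _))

variable {D : Type*} [Category* D]

lemma isLeftKanExtension_of_preservesFilteredColimits (F : Ind C ⥤ D)
    [PreservesFilteredColimitsOfSize.{v, v} F] : F.IsLeftKanExtension (𝟙 (Ind.yoneda ⋙ F)) :=
  LeftExtension.IsPointwiseLeftKanExtension.isLeftKanExtension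
    fun X ↦ (Ind.yoneda.denseAt X).isPointwiseLeftKanExtensionAt F

instance (F₀ : C ⥤ D) [Ind.yoneda.HasPointwiseLeftKanExtension F₀] :
    PreservesFilteredColimitsOfSize.{v, v} (Ind.yoneda.pointwiseLeftKanExtension F₀) where
  preserves_filtered_colimits _ _ _ := ⟨⟨fun ht ↦
    ⟨(Ind.yoneda.pointwiseLeftKanExtensionIsPointwiseLeftKanExtension F₀).isColimitMapCocone ht⟩⟩⟩

end Ind

end CategoryTheory

/-- Universal property of the Ind-completion: for a small category `C` and a category `D` with
all filtered colimits, precomposition with `Ind.yoneda : C ⥤ Ind C` is an equivalence from the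
full subcategory of `Ind C ⥤ D` spanned by filtered-colimit-preserving functors to `C ⥤ D`. -/
theorem ind_universal_property
    {C : Type v} [SmallCategory C] {D : Type u} [Category.{v} D] [HasFilteredColimits D] :
    (ObjectProperty.ι (P := fun F : Ind C ⥤ D => PreservesFilteredColimits F) ⋙
      (Functor.whiskeringLeft C (Ind C) D).obj Ind.yoneda).IsEquivalence :=
  ObjectProperty.isEquivalence_ιCompWhiskeringLeftObj _
    (fun F _ ↦ Ind.isLeftKanExtension_of_preservesFilteredColimits F) (fun _ ↦ inferInstance)
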